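/- Assume R(t) is invertible for every t ∈ [0,T], set A = −R⁻¹Q, B = R⁻¹, C = P − QᵀR⁻¹Q, and let W : [0,T] → ℝ^{n×n} be a C¹ symmetric solution of the Riccati differential equation Ẇ − C + WA + AᵀW + WBW = 0 on [0,T]. Then for every v in the space V of C¹ T-periodic functions with v(0) = v(T), the quadratic functional satisfies the identity Q(v) = v(0)·(W(T) − W(0))v(0) + ∫₀ᵀ ( R(t)v̇(t) + Q(t)v(t) − W(t)v(t) ) · R(t)⁻¹ ( R(t)v̇(t) + Q(t)v(t) − W(t)v(t) ) dt. -/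

import Mathlib

/-!
Along the Riccati equation the derivative of `W` is `P - (Q - W)ᵀ R⁻¹ (Q - W)`, and completing
the square in `R⁻¹` shows that the integrand of `Q(v)` minus `(Rv̇ + Qv - Wv)·R⁻¹(Rv̇ + Qv - Wv)`
is exactly `d/dt (v·Wv)`. Integrating, the boundary term `v(T)·W(T)v(T) - v(0)·W(0)v(0)` becomes
`v(0)·(W(T) - W(0))v(0)` by periodicity.
-/

open Matrix Set intervalIntegral

section Algebra

variable {ι α : Type*} [Fintype ι] [CommRing α]

theorem mulVec_dotProduct_mulVec {m n : Type*} [Fintype m] [Fintype n] (M : Matrix m ι α)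
    (N : Matrix m n α) (x : ι → α) (y : n → α) :
    (M *ᵥ x) ⬝ᵥ (N *ᵥ y) = x ⬝ᵥ (Mᵀ * N) *ᵥ y := by
  rw [← mulVec_mulVec, dotProduct_transpose_mulVec, dotProduct_comm]

variable [DecidableEq ι]

theorem add_mulVec_dotProduct_inv_mulVec {r : Matrix ι ι α} (hr : r.IsSymm) (hdet : IsUnit r.det)
    (s : Matrix ι ι α) (x y : ι → α) :
    (r *ᵥ y + s *ᵥ x) ⬝ᵥ r⁻¹ *ᵥ (r *ᵥ y + s *ᵥ x)
      = y ⬝ᵥ r *ᵥ y + 2 * (y ⬝ᵥ s *ᵥ x) + x ⬝ᵥ (sᵀ * r⁻¹ * s) *ᵥ x := by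
  have hinv : r⁻¹ *ᵥ (r *ᵥ y + s *ᵥ x) = y + (r⁻¹ * s) *ᵥ x := by
    rw [mulVec_add, mulVec_mulVec, nonsing_inv_mul r hdet, one_mulVec, mulVec_mulVec]
  have hcross : (r *ᵥ y) ⬝ᵥ (r⁻¹ * s) *ᵥ x = y ⬝ᵥ s *ᵥ x := by
    rw [mulVec_dotProduct_mulVec, hr.eq, ← Matrix.mul_assoc, mul_nonsing_inv r hdet, Matrix.one_mul]
  rw [hinv, add_dotProduct, dotProduct_add, dotProduct_add, dotProduct_comm (r *ᵥ y) y, hcross,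
    dotProduct_comm (s *ᵥ x) y, mulVec_dotProduct_mulVec, Matrix.mul_assoc]
  ring

theorem riccati_rhs_eq {p q r w : Matrix ι ι α} (hr : r.IsSymm) (hw : w.IsSymm) :
    (p - qᵀ * r⁻¹ * q) - w * (-r⁻¹ * q) - (-r⁻¹ * q)ᵀ * w - w * r⁻¹ * w
      = p - (q - w)ᵀ * r⁻¹ * (q - w) := by
  rw [transpose_sub, hw.eq, transpose_mul, transpose_neg, hr.inv.eq]
  noncomm_ring

theorem quadForm_sub_sq_eq {p q r w : Matrix ι ι α} (hr : r.IsSymm) (hdet : IsUnit r.det)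
    (hw : w.IsSymm) (x y : ι → α) :
    x ⬝ᵥ p *ᵥ x + 2 * (y ⬝ᵥ q *ᵥ x) + y ⬝ᵥ r *ᵥ y
        - (r *ᵥ y + q *ᵥ x - w *ᵥ x) ⬝ᵥ r⁻¹ *ᵥ (r *ᵥ y + q *ᵥ x - w *ᵥ x)
      = y ⬝ᵥ w *ᵥ x + x ⬝ᵥ ((p - (q - w)ᵀ * r⁻¹ * (q - w)) *ᵥ x + w *ᵥ y) := by
  have hwxy : x ⬝ᵥ w *ᵥ y = y ⬝ᵥ w *ᵥ x := by rw [← dotProduct_transpose_mulVec, hw.eq]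
  rw [add_sub_assoc (r *ᵥ y), ← sub_mulVec, add_mulVec_dotProduct_inv_mulVec hr hdet]
  simp only [sub_mulVec, dotProduct_sub, dotProduct_add, hwxy]
  ring

end Algebra

section Calculus

variable {𝕜 : Type*} [NontriviallyNormedField 𝕜] {ι m : Type*} [Fintype ι] {t : 𝕜}

theorem HasDerivAt.dotProduct {f g : 𝕜 → ι → 𝕜} {f' g' : ι → 𝕜}
    (hf : HasDerivAt f f' t) (hg : HasDerivAt g g' t) :
    HasDerivAt (fun s => f s ⬝ᵥ g s) (f' ⬝ᵥ g t + f t ⬝ᵥ g') t := by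
  simp only [_root_.dotProduct, ← Finset.sum_add_distrib]
  exact HasDerivAt.fun_sum fun i _ => (hasDerivAt_pi.mp hf i).mul (hasDerivAt_pi.mp hg i)

theorem HasDerivAt.matrix_mulVec {M : 𝕜 → Matrix m ι 𝕜} {M' : Matrix m ι 𝕜} {v : 𝕜 → ι → 𝕜}
    {v' : ι → 𝕜} (hM : ∀ i j, HasDerivAt (fun s => M s i j) (M' i j) t)
    (hv : HasDerivAt v v' t) :
    HasDerivAt (fun s => M s *ᵥ v s) (M' *ᵥ v t + M t *ᵥ v') t :=
  hasDerivAt_pi.2 fun i => (hasDerivAt_pi.2 (hM i)).dotProduct hv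

end Calculus

section Continuity

variable {X R m n : Type*} [TopologicalSpace X] [TopologicalSpace R] {s : Set X}

theorem continuousOn_matrix {f : X → Matrix m n R} (h : ∀ i j, ContinuousOn (fun x => f x i j) s) :
    ContinuousOn f s :=
  continuousOn_pi.2 fun i => continuousOn_pi.2 (h i)

theorem ContinuousOn.matrix_inv {K : Type*} [Field K] [TopologicalSpace K]
    [IsTopologicalDivisionRing K] [Fintype n] [DecidableEq n] {f : X → Matrix n n K}
    (hf : ContinuousOn f s) (hdet : ∀ x ∈ s, IsUnit (f x).det) :
    ContinuousOn (fun x => (f x)⁻¹) s := fun x hx =>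
  have hinv : ContinuousAt Ring.inverse (f x).det := by
    rw [Ring.inverse_eq_inv']
    exact continuousAt_inv₀ (hdet x hx).ne_zero
  (continuousAt_matrix_inv _ hinv).comp_continuousWithinAt (hf x hx)

variable [Fintype n] [NonUnitalNonAssocSemiring R] [IsTopologicalSemiring R]

theorem ContinuousOn.dotProduct {f g : X → n → R} (hf : ContinuousOn f s) (hg : ContinuousOn g s) :
    ContinuousOn (fun x => f x ⬝ᵥ g x) s := by
  rw [continuousOn_iff_continuous_domRestrict] at *
  exact hf.dotProduct hg

theorem ContinuousOn.matrix_mulVec {M : X → Matrix m n R} {v : X → n → R}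
    (hM : ContinuousOn M s) (hv : ContinuousOn v s) :
    ContinuousOn (fun x => M x *ᵥ v x) s := by
  rw [continuousOn_iff_continuous_domRestrict] at *
  exact hM.matrix_mulVec hv

end Continuity

theorem integral_quadForm_eq {ι : Type*} [Fintype ι] [DecidableEq ι] {P Q R W : ℝ → Matrix ι ι ℝ}
    {v : ℝ → ι → ℝ} {a b : ℝ} (hab : a ≤ b)
    (hP : ContinuousOn P (Icc a b)) (hQ : ContinuousOn Q (Icc a b))
    (hR : ContinuousOn R (Icc a b)) (hRs : ∀ t ∈ Icc a b, (R t).IsSymm)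
    (hRdet : ∀ t ∈ Icc a b, IsUnit (R t).det) (hWs : ∀ t ∈ Icc a b, (W t).IsSymm)
    (hW : ∀ t ∈ Icc a b, ∀ i j,
      HasDerivAt (fun s => W s i j) ((P t - (Q t - W t)ᵀ * (R t)⁻¹ * (Q t - W t)) i j) t)
    (hv : ContDiff ℝ 1 v) :
    ∫ t in a..b, (v t ⬝ᵥ P t *ᵥ v t + 2 * (deriv v t ⬝ᵥ Q t *ᵥ v t)
        + deriv v t ⬝ᵥ R t *ᵥ deriv v t)
      = v b ⬝ᵥ W b *ᵥ v b - v a ⬝ᵥ W a *ᵥ v a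
        + ∫ t in a..b, ((R t *ᵥ deriv v t + Q t *ᵥ v t - W t *ᵥ v t) ⬝ᵥ
            (R t)⁻¹ *ᵥ (R t *ᵥ deriv v t + Q t *ᵥ v t - W t *ᵥ v t)) := by
  set L : ℝ → ℝ := fun t => v t ⬝ᵥ P t *ᵥ v t + 2 * (deriv v t ⬝ᵥ Q t *ᵥ v t)
      + deriv v t ⬝ᵥ R t *ᵥ deriv v t
  set S : ℝ → ℝ := fun t => (R t *ᵥ deriv v t + Q t *ᵥ v t - W t *ᵥ v t) ⬝ᵥ
      (R t)⁻¹ *ᵥ (R t *ᵥ deriv v t + Q t *ᵥ v t - W t *ᵥ v t)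
  have hvc : ContinuousOn v (Icc a b) := hv.continuous.continuousOn
  have hv'c : ContinuousOn (deriv v) (Icc a b) := (hv.continuous_deriv le_rfl).continuousOn
  have hWc : ContinuousOn W (Icc a b) := continuousOn_matrix fun i j t ht =>
    (hW t ht i j).continuousAt.continuousWithinAt
  have hLc : ContinuousOn L (Icc a b) :=
    ((hvc.dotProduct (hP.matrix_mulVec hvc)).add
      (continuousOn_const.mul (hv'c.dotProduct (hQ.matrix_mulVec hvc)))).add
      (hv'c.dotProduct (hR.matrix_mulVec hv'c))
  have hSc : ContinuousOn S (Icc a b) := by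
    have hresidual :=
      ((hR.matrix_mulVec hv'c).add (hQ.matrix_mulVec hvc)).sub (hWc.matrix_mulVec hvc)
    exact hresidual.dotProduct ((hR.matrix_inv hRdet).matrix_mulVec hresidual)
  have hLi : IntervalIntegrable L MeasureTheory.volume a b := hLc.intervalIntegrable_of_Icc hab
  have hSi : IntervalIntegrable S MeasureTheory.volume a b := hSc.intervalIntegrable_of_Icc hab
  have hderiv : ∀ t ∈ uIcc a b, HasDerivAt (fun s => v s ⬝ᵥ W s *ᵥ v s) (L t - S t) t := by
    intro t ht
    rw [uIcc_of_le hab] at ht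
    have hvt : HasDerivAt v (deriv v t) t := (hv.differentiable one_ne_zero t).hasDerivAt
    rw [show L t - S t = _ from quadForm_sub_sq_eq (p := P t) (hRs t ht) (hRdet t ht) (hWs t ht)
      (v t) (deriv v t)]
    exact hvt.dotProduct (HasDerivAt.matrix_mulVec (hW t ht) hvt)
  have hftc := integral_eq_sub_of_hasDerivAt hderiv (hLi.sub hSi)
  rw [intervalIntegral.integral_sub hLi hSi] at hftc
  linarith

theorem stmt_6_general (n : ℕ) (T : ℝ) (hT : 0 < T)
    (P Q R : ℝ → Matrix (Fin n) (Fin n) ℝ)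
    (hPc : ∀ i j, ContDiffOn ℝ 1 (fun t => P t i j) (Icc 0 T))
    (hQc : ∀ i j, ContDiffOn ℝ 1 (fun t => Q t i j) (Icc 0 T))
    (hRc : ∀ i j, ContDiffOn ℝ 1 (fun t => R t i j) (Icc 0 T))
    (hRs : ∀ t ∈ Icc (0:ℝ) T, (R t).IsSymm)
    (hRinv : ∀ t ∈ Icc (0:ℝ) T, IsUnit (R t).det)
    (A B C : ℝ → Matrix (Fin n) (Fin n) ℝ)
    (hA : ∀ t, A t = -(R t)⁻¹ * Q t)
    (hB : ∀ t, B t = (R t)⁻¹)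
    (hC : ∀ t, C t = P t - (Q t)ᵀ * (R t)⁻¹ * Q t)
    (W : ℝ → Matrix (Fin n) (Fin n) ℝ)
    (hWs : ∀ t ∈ Icc (0:ℝ) T, (W t).IsSymm)
    (hW : ∀ t ∈ Icc (0:ℝ) T, ∀ i j,
      HasDerivAt (fun s => W s i j)
        ((C t - W t * A t - (A t)ᵀ * W t - W t * B t * W t) i j) t) :
    ∀ v : ℝ → Fin n → ℝ, ContDiff ℝ 1 v → v 0 = v T →
      (∫ t in (0:ℝ)..T,
        (v t ⬝ᵥ (P t).mulVec (v t) + 2 * (deriv v t ⬝ᵥ (Q t).mulVec (v t))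
          + deriv v t ⬝ᵥ (R t).mulVec (deriv v t)))
      = v 0 ⬝ᵥ (W T - W 0).mulVec (v 0)
        + ∫ t in (0:ℝ)..T,
            (((R t).mulVec (deriv v t) + (Q t).mulVec (v t) - (W t).mulVec (v t)) ⬝ᵥ
              ((R t)⁻¹).mulVec
                ((R t).mulVec (deriv v t) + (Q t).mulVec (v t) - (W t).mulVec (v t))) := by
  intro v hv hper
  have hRiccati : ∀ t ∈ Icc (0:ℝ) T, ∀ i j, HasDerivAt (fun s => W s i j)
      ((P t - (Q t - W t)ᵀ * (R t)⁻¹ * (Q t - W t)) i j) t := by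
    intro t ht
    simpa only [hA, hB, hC, riccati_rhs_eq (hRs t ht) (hWs t ht)] using hW t ht
  have hcont {M : ℝ → Matrix (Fin n) (Fin n) ℝ}
      (hM : ∀ i j, ContDiffOn ℝ 1 (fun t => M t i j) (Icc 0 T)) : ContinuousOn M (Icc 0 T) :=
    continuousOn_matrix fun i j => (hM i j).continuousOn
  rw [integral_quadForm_eq hT.le (hcont hPc) (hcont hQc) (hcont hRc) hRs hRinv hWs hRiccati hv,
    ← hper, sub_mulVec, dotProduct_sub]

/-- Assume `R(t)` is invertible on `[0,T]`, set `A = −R⁻¹Q`, `B = R⁻¹`,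
`C = P − QᵀR⁻¹Q`, and let `W` be a `C¹` symmetric solution of the Riccati equation
`Ẇ − C + WA + AᵀW + WBW = 0` on `[0,T]`. Then for every `C¹` `T`-periodic `v`,
`Q(v) = v(0)·(W(T) − W(0))v(0) + ∫₀ᵀ (Rv̇ + Qv − Wv)·R⁻¹(Rv̇ + Qv − Wv) dt`. -/
theorem stmt_6 (n : ℕ) (hn : 0 < n) (T : ℝ) (hT : 0 < T)
    (P Q R : ℝ → Matrix (Fin n) (Fin n) ℝ)
    (hPc : ∀ i j, ContDiffOn ℝ 1 (fun t => P t i j) (Icc 0 T))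
    (hQc : ∀ i j, ContDiffOn ℝ 1 (fun t => Q t i j) (Icc 0 T))
    (hRc : ∀ i j, ContDiffOn ℝ 1 (fun t => R t i j) (Icc 0 T))
    (hPs : ∀ t ∈ Icc (0:ℝ) T, (P t).IsSymm)
    (hRs : ∀ t ∈ Icc (0:ℝ) T, (R t).IsSymm)
    (hRinv : ∀ t ∈ Icc (0:ℝ) T, IsUnit (R t).det)
    (A B C : ℝ → Matrix (Fin n) (Fin n) ℝ)
    (hA : ∀ t, A t = -(R t)⁻¹ * Q t)
    (hB : ∀ t, B t = (R t)⁻¹)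
    (hC : ∀ t, C t = P t - (Q t)ᵀ * (R t)⁻¹ * Q t)
    (W : ℝ → Matrix (Fin n) (Fin n) ℝ)
    (hWc : ∀ i j, ContDiffOn ℝ 1 (fun t => W t i j) (Icc 0 T))
    (hWs : ∀ t ∈ Icc (0:ℝ) T, (W t).IsSymm)
    (hW : ∀ t ∈ Icc (0:ℝ) T, ∀ i j,
      HasDerivAt (fun s => W s i j)
        ((C t - W t * A t - (A t)ᵀ * W t - W t * B t * W t) i j) t) :
    ∀ v : ℝ → Fin n → ℝ, ContDiff ℝ 1 v → v 0 = v T →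
      (∫ t in (0:ℝ)..T,
        (v t ⬝ᵥ (P t).mulVec (v t) + 2 * (deriv v t ⬝ᵥ (Q t).mulVec (v t))
          + deriv v t ⬝ᵥ (R t).mulVec (deriv v t)))
      = v 0 ⬝ᵥ (W T - W 0).mulVec (v 0)
        + ∫ t in (0:ℝ)..T,
            (((R t).mulVec (deriv v t) + (Q t).mulVec (v t) - (W t).mulVec (v t)) ⬝ᵥ
              ((R t)⁻¹).mulVec
                ((R t).mulVec (deriv v t) + (Q t).mulVec (v t) - (W t).mulVec (v t))) :=
  stmt_6_general n T hT P Q R hPc hQc hRc hRs hRinv A B C hA hB hC W hWs hW
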